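/- arXiv:1811.10011 — 5 statements merged into one kernel-verified Lean document; each statement's English description precedes it below -/
import Mathlib

section
/- Let f be a weakly holomorphic modular form of weight k for the Fricke group Γ₀⁺(3) whose Fourier coefficients are all real. Then for every θ in [π/2, 5π/6], the value e^{ikθ/2} f((1/√3)e^{iθ}) is a real number. -/
open Complex Real ComplexConjugate

/-!
On the arc `|z| = 1/√3` the Fricke involution `z ↦ -1/(3z)` acts as the reflection
`z ↦ -z̄`, and real Fourier coefficients give `f(-z̄) = conj (f z)`. Hence at
`z = e^{iθ}/√3` the transformation law reads `conj (f z) = e^{ikθ} f z`, so that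
`e^{ikθ/2} f z` is fixed by complex conjugation.
-/

theorem cexp_two_pi_I_mul_neg_conj (x : ℝ) (z : ℂ) :
    cexp (2 * π * I * x * -conj z) = conj (cexp (2 * π * I * x * z)) := by
  rw [← exp_conj]
  congr 1
  simp only [map_mul, conj_ofReal, conj_I, map_ofNat]
  ring

theorem apply_neg_conj_of_real_fourier {f : ℂ → ℂ} {n₀ : ℤ} {a : ℤ → ℝ}
    (ha : ∀ z : ℂ, 0 < z.im →
      f z = ∑' n : ℕ, (a (n₀ + n) : ℂ) * cexp (2 * π * I * ((n₀ : ℂ) + (n : ℂ)) * z))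
    {z : ℂ} (hz : 0 < z.im) : f (-conj z) = conj (f z) := by
  have hz' : 0 < (-conj z).im := by simpa using hz
  rw [ha _ hz', ha _ hz, conj_tsum]
  refine tsum_congr fun n => ?_
  have hcast : (n₀ : ℂ) + (n : ℂ) = ((n₀ + n : ℝ) : ℂ) := by push_cast; rfl
  rw [hcast, cexp_two_pi_I_mul_neg_conj, map_mul, conj_ofReal]

theorem neg_one_div_mul_eq_neg_conj {N : ℝ} (hN : 0 < N) (θ : ℝ) :
    -1 / (N * ((1 / (√N : ℂ)) * cexp (I * θ))) = -conj ((1 / (√N : ℂ)) * cexp (I * θ)) := by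
  have hsqrt : (√N : ℂ) ≠ 0 := by exact_mod_cast (Real.sqrt_pos.2 hN).ne'
  have hNsq : (√N : ℂ) * √N = N := by exact_mod_cast Real.mul_self_sqrt hN.le
  have hexp : cexp (I * θ) * conj (cexp (I * θ)) = 1 := by
    rw [← exp_conj, ← Complex.exp_add]
    simp [conj_ofReal]
  rw [map_mul, map_div₀, map_one, conj_ofReal, ← hNsq]
  field_simp
  linear_combination hexp

theorem im_one_div_sqrt_mul_cexp_pos {N : ℝ} (hN : 0 < N) {θ : ℝ} (hθ : 0 < Real.sin θ) :
    0 < ((1 / (√N : ℂ)) * cexp (I * θ)).im := by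
  rw [mul_comm I, exp_mul_I, ← ofReal_cos, ← ofReal_sin, one_div, ← ofReal_inv]
  simp only [mul_im, ofReal_re, ofReal_im, add_im, I_re, I_im, mul_one, zero_mul, add_zero,
    mul_zero, add_re, mul_re, zero_add, sub_self]
  exact mul_pos (inv_pos.2 (Real.sqrt_pos.2 hN)) hθ

theorem exists_ofReal_eq_cexp_mul_of_conj_eq {w : ℂ} {φ : ℝ}
    (hw : conj w = cexp (φ * I) * w) : ∃ r : ℝ, cexp (φ / 2 * I) * w = r := by
  refine ⟨(cexp (φ / 2 * I) * w).re, (conj_eq_iff_re.mp ?_).symm⟩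
  rw [map_mul, hw, ← exp_conj, ← mul_assoc, ← Complex.exp_add]
  congr 2
  simp only [map_mul, map_div₀, conj_ofReal, conj_I, map_ofNat]
  ring

theorem statement0_general (k : ℤ) (f : ℂ → ℂ)
    (hfricke : ∀ z : ℂ, 0 < z.im →
      f (-1 / (3 * z)) = ((Real.sqrt 3 : ℂ) * z) ^ k * f z)
    (hcoeff : ∃ (n₀ : ℤ) (a : ℤ → ℝ), ∀ z : ℂ, 0 < z.im →
      f z = ∑' n : ℕ, (a (n₀ + n) : ℂ) *
        Complex.exp (2 * (Real.pi : ℂ) * Complex.I * ((n₀ : ℂ) + (n : ℂ)) * z)) :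
    ∀ θ ∈ Set.Icc (Real.pi / 2) (5 * Real.pi / 6),
      ∃ r : ℝ, Complex.exp (Complex.I * k * θ / 2) *
        f ((1 / (Real.sqrt 3 : ℂ)) * Complex.exp (Complex.I * θ)) = (r : ℂ) := by
  obtain ⟨n₀, a, ha⟩ := hcoeff
  intro θ hθ
  set z := (1 / (Real.sqrt 3 : ℂ)) * cexp (I * θ)
  have hsin : 0 < Real.sin θ :=
    Real.sin_pos_of_pos_of_lt_pi (by linarith [hθ.1, pi_pos]) (by linarith [hθ.2, pi_pos])
  have hz : 0 < z.im := im_one_div_sqrt_mul_cexp_pos three_pos hsin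
  have hreflect : -1 / (3 * z) = -conj z := by
    simpa only [ofReal_ofNat] using neg_one_div_mul_eq_neg_conj three_pos θ
  have hscale : (√3 : ℂ) * z = cexp (θ * I) := by
    have : (√3 : ℂ) ≠ 0 := by exact_mod_cast (Real.sqrt_pos.2 three_pos).ne'
    simp only [z]
    field_simp
  have hconj : conj (f z) = cexp ((k * θ : ℝ) * I) * f z := by
    rw [← apply_neg_conj_of_real_fourier ha hz, ← hreflect, hfricke z hz, hscale,
      ← exp_int_mul]
    push_cast
    ring_nf
  obtain ⟨r, hr⟩ := exists_ofReal_eq_cexp_mul_of_conj_eq hconj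
  exact ⟨r, by rw [← hr]; push_cast; ring_nf⟩

/-- If `f` is a weakly holomorphic modular form of weight `k` for the Fricke
group `Γ₀⁺(3)` with real Fourier coefficients, then `e^{ikθ/2} f((1/√3)e^{iθ})` is real
for every `θ ∈ [π/2, 5π/6]`. -/
theorem statement0 (k : ℤ) (hk : Even k) (f : ℂ → ℂ)
    (hhol : ∀ z : ℂ, 0 < z.im → DifferentiableAt ℂ f z)
    (htrans : ∀ z : ℂ, 0 < z.im → ∀ a b c d : ℤ, a * d - b * c = 1 → (3 : ℤ) ∣ c →
      f ((a * z + b) / (c * z + d)) = (c * z + d) ^ k * f z)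
    (hfricke : ∀ z : ℂ, 0 < z.im →
      f (-1 / (3 * z)) = ((Real.sqrt 3 : ℂ) * z) ^ k * f z)
    (hcoeff : ∃ (n₀ : ℤ) (a : ℤ → ℝ), ∀ z : ℂ, 0 < z.im →
      f z = ∑' n : ℕ, (a (n₀ + n) : ℂ) *
        Complex.exp (2 * (Real.pi : ℂ) * Complex.I * ((n₀ : ℂ) + (n : ℂ)) * z)) :
    ∀ θ ∈ Set.Icc (Real.pi / 2) (5 * Real.pi / 6),
      ∃ r : ℝ, Complex.exp (Complex.I * k * θ / 2) *
        f ((1 / (Real.sqrt 3 : ℂ)) * Complex.exp (Complex.I * θ)) = (r : ℂ) :=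
  statement0_general k f hfricke hcoeff
end

section
/- For every z in the upper half plane, the absolute value of the infinite product ∏_{n=1}^∞ (1 - e^{2πinz}) is at most Σ_{n∈ℤ} e^{-π Im(z)(3n²-n)}. -/
/-!
Euler's pentagonal number theorem
`∏ (1 - x^(n+1)) = ∑_{k ≥ 0} (-1)^k (x^{p(-k)} - x^{p(k+1)})`, `p(n) = n(3n-1)/2`, holds for
`‖x‖ < 1` in every complete normed commutative ring: Mathlib derives it in any topological ring
from the summability and the vanishing tail of an auxiliary series, and both follow from the
uniform bound `‖∏ (1 - x^(k+i+1))‖ ≤ exp (1 - ‖x‖)⁻¹` on the finite products. The triangle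
inequality then bounds the norm of the product by `∑_{n ∈ ℤ} ‖x‖^{p(n)}`, which for
`x = e^{2πiz}` is the series of the theorem.
-/

open Complex Real Filter Topology

lemma natAbs_le_pentagonal (n : ℤ) : n.natAbs ≤ pentagonal n := by
  have h := two_mul_natCast_pentagonal n
  zify
  rcases abs_cases n with ⟨habs, hn⟩ | ⟨habs, hn⟩ <;> rw [habs] <;> nlinarith

lemma pow_pentagonal_le_pow_natAbs {r : ℝ} (hr0 : 0 ≤ r) (hr1 : r ≤ 1) (n : ℤ) :
    r ^ pentagonal n ≤ r ^ n.natAbs :=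
  pow_le_pow_of_le_one hr0 hr1 (natAbs_le_pentagonal n)

lemma summable_pow_pentagonal {r : ℝ} (hr0 : 0 ≤ r) (hr1 : r < 1) :
    Summable fun n : ℤ ↦ r ^ pentagonal n := by
  have hgeom := summable_geometric_of_lt_one hr0 hr1
  refine summable_int_iff_summable_nat_and_neg.mpr ⟨?_, ?_⟩ <;>
    refine hgeom.of_nonneg_of_le (fun _ ↦ by positivity) fun n ↦ ?_
  · simpa using pow_pentagonal_le_pow_natAbs hr0 hr1.le n
  · simpa using pow_pentagonal_le_pow_natAbs hr0 hr1.le (-n)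

lemma hasSum_pow_pentagonal_neg_add_pow_pentagonal_add_one {r : ℝ} (hr0 : 0 ≤ r) (hr1 : r < 1) :
    HasSum (fun k : ℕ ↦ r ^ pentagonal (-k) + r ^ pentagonal (k + 1))
      (∑' n : ℤ, r ^ pentagonal n) := by
  have h := (Equiv.neg ℤ).hasSum_iff.mpr (summable_pow_pentagonal hr0 hr1).hasSum
  simpa using h.nat_add_neg_add_one

lemma norm_neg_one_pow_mul_le {R : Type*} [NormedRing R] (k : ℕ) (y : R) :
    ‖(-1) ^ k * y‖ ≤ ‖y‖ := by
  rcases neg_one_pow_eq_or R k with h | h <;> simp [h]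

section NormedCommRing

variable {R : Type*} [NormedCommRing R] [NormOneClass R] {x : R}

lemma norm_prod_one_sub_pow_le (hx : ‖x‖ < 1) (k : ℕ) (s : Finset ℕ) :
    ‖∏ i ∈ s, (1 - x ^ (k + i + 1))‖ ≤ Real.exp (1 - ‖x‖)⁻¹ := by
  have hsum : ∑ i ∈ s, ‖-x ^ (k + i + 1)‖ ≤ (1 - ‖x‖)⁻¹ := by
    rw [← tsum_geometric_of_lt_one (norm_nonneg x) hx]
    refine (Finset.sum_le_sum fun i _ ↦ ?_).trans
      ((summable_geometric_of_lt_one (norm_nonneg x) hx).sum_le_tsum s fun _ _ ↦ by positivity)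
    rw [norm_neg]
    exact (norm_pow_le x _).trans (pow_le_pow_of_le_one (norm_nonneg x) hx.le (by omega))
  have h := s.norm_prod_one_add_sub_one_le fun i ↦ -x ^ (k + i + 1)
  simp only [← sub_eq_add_neg] at h
  calc ‖∏ i ∈ s, (1 - x ^ (k + i + 1))‖
      ≤ ‖∏ i ∈ s, (1 - x ^ (k + i + 1)) - 1‖ + ‖(1 : R)‖ := norm_le_norm_sub_add _ _
    _ ≤ Real.exp (∑ i ∈ s, ‖-x ^ (k + i + 1)‖) := by rw [norm_one]; linarith
    _ ≤ Real.exp (1 - ‖x‖)⁻¹ := Real.exp_le_exp.mpr hsum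

lemma norm_pow_mul_prod_one_sub_pow_le (hx : ‖x‖ < 1) (k n : ℕ) :
    ‖x ^ ((k + 1) * n) * ∏ i ∈ Finset.range (n + 1), (1 - x ^ (k + i + 1))‖ ≤
      Real.exp (1 - ‖x‖)⁻¹ * ‖x‖ ^ n := by
  have hpow : ‖x ^ ((k + 1) * n)‖ ≤ ‖x‖ ^ n :=
    (norm_pow_le x _).trans <|
      pow_le_pow_of_le_one (norm_nonneg x) hx.le (Nat.le_mul_of_pos_left n k.succ_pos)
  rw [mul_comm (Real.exp _)]
  exact (norm_mul_le _ _).trans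
    (mul_le_mul hpow (norm_prod_one_sub_pow_le hx k _) (norm_nonneg _) (by positivity))

lemma norm_tsum_pow_mul_prod_one_sub_pow_le (hx : ‖x‖ < 1) (k : ℕ) :
    ‖∑' n, x ^ ((k + 1) * n) * ∏ i ∈ Finset.range (n + 1), (1 - x ^ (k + i + 1))‖ ≤
      Real.exp (1 - ‖x‖)⁻¹ * (1 - ‖x‖)⁻¹ :=
  tsum_of_norm_bounded ((hasSum_geometric_of_lt_one (norm_nonneg x) hx).mul_left _)
    (norm_pow_mul_prod_one_sub_pow_le hx k)

lemma norm_neg_one_pow_mul_pow_sub_pow_le (k a b : ℕ) :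
    ‖(-1) ^ k * (x ^ a - x ^ b)‖ ≤ ‖x‖ ^ a + ‖x‖ ^ b :=
  (norm_neg_one_pow_mul_le k _).trans <|
    (norm_sub_le _ _).trans (add_le_add (norm_pow_le _ _) (norm_pow_le _ _))

variable [CompleteSpace R]

lemma summable_pow_mul_prod_one_sub_pow (hx : ‖x‖ < 1) (k : ℕ) :
    Summable fun n ↦ x ^ ((k + 1) * n) * ∏ i ∈ Finset.range (n + 1), (1 - x ^ (k + i + 1)) :=
  ((summable_geometric_of_lt_one (norm_nonneg x) hx).mul_left _).of_norm_bounded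
    (norm_pow_mul_prod_one_sub_pow_le hx k)

lemma multipliable_one_sub_pow_add (hx : ‖x‖ < 1) (k : ℕ) :
    Multipliable fun n ↦ 1 - x ^ (n + k + 1) := by
  simp only [sub_eq_add_neg]
  refine multipliable_one_add_of_summable <|
    (summable_geometric_of_lt_one (norm_nonneg x) hx).of_nonneg_of_le (fun _ ↦ norm_nonneg _)
      fun n ↦ ?_
  rw [norm_neg]
  exact (norm_pow_le x _).trans (pow_le_pow_of_le_one (norm_nonneg x) hx.le (by omega))

theorem tprod_one_sub_pow_eq_tsum_pentagonal (hx : ‖x‖ < 1) :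
    ∏' n, (1 - x ^ (n + 1)) =
      ∑' k : ℕ, (-1) ^ k * (x ^ pentagonal (-k) - x ^ pentagonal (k + 1)) := by
  have htail : Tendsto (fun k ↦ (-1) ^ (k + 1) * x ^ ((k + 1) * (3 * k + 4) / 2) *
      ∑' n, x ^ ((k + 1) * n) * ∏ i ∈ Finset.range (n + 1), (1 - x ^ (k + i + 1)))
      atTop (𝓝 0) := by
    refine squeeze_zero_norm (a := fun k ↦ ‖x‖ ^ k * (Real.exp (1 - ‖x‖)⁻¹ * (1 - ‖x‖)⁻¹))
      (fun k ↦ ?_) (by simpa using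
        (tendsto_pow_atTop_nhds_zero_of_lt_one (norm_nonneg x) hx).mul_const _)
    have hexp : k ≤ (k + 1) * (3 * k + 4) / 2 := by
      rw [Nat.le_div_iff_mul_le two_pos]
      nlinarith
    rw [mul_assoc]
    refine (norm_neg_one_pow_mul_le _ _).trans <| (norm_mul_le _ _).trans ?_
    exact mul_le_mul ((norm_pow_le x _).trans (pow_le_pow_of_le_one (norm_nonneg x) hx.le hexp))
      (norm_tsum_pow_mul_prod_one_sub_pow_le hx k) (norm_nonneg _) (by positivity)
  have hrhs := (hasSum_pow_pentagonal_neg_add_pow_pentagonal_add_one (norm_nonneg x) hx).summable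
  exact Pentagonal.tprod_one_sub_pow (tendsto_pow_atTop_nhds_zero_of_norm_lt_one hx)
    (summable_pow_mul_prod_one_sub_pow hx) (multipliable_one_sub_pow_add hx)
    (hrhs.of_norm_bounded fun k ↦ norm_neg_one_pow_mul_pow_sub_pow_le k _ _) htail

theorem norm_tprod_one_sub_pow_le (hx : ‖x‖ < 1) :
    ‖∏' n, (1 - x ^ (n + 1))‖ ≤ ∑' n : ℤ, ‖x‖ ^ pentagonal n := by
  rw [tprod_one_sub_pow_eq_tsum_pentagonal hx]
  refine tsum_of_norm_bounded
    (hasSum_pow_pentagonal_neg_add_pow_pentagonal_add_one (norm_nonneg x) hx)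
    fun k ↦ norm_neg_one_pow_mul_pow_sub_pow_le k _ _

end NormedCommRing

/-- For `z` in the upper half plane,
`|∏_{n=1}^∞ (1 - e^{2πinz})| ≤ Σ_{n ∈ ℤ} e^{-π Im(z)(3n²-n)}`. -/
theorem statement2 : ∀ z : ℂ, 0 < z.im →
    ‖(∏' n : ℕ, (1 - Complex.exp (2 * (Real.pi : ℂ) * Complex.I * ((n : ℂ) + 1) * z)))‖
      ≤ ∑' n : ℤ, Real.exp (-Real.pi * z.im * (3 * (n : ℝ) ^ 2 - (n : ℝ))) := by
  intro z hz
  set q := cexp (2 * π * I * z)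
  have hq : ‖q‖ = Real.exp (-(2 * π * z.im)) := by
    rw [Complex.norm_exp]
    congr 1
    simp
  have hq1 : ‖q‖ < 1 := by
    rw [hq, Real.exp_lt_one_iff, neg_lt_zero]
    positivity
  have hpow (n : ℕ) : cexp (2 * π * I * (n + 1) * z) = q ^ (n + 1) := by
    rw [← Complex.exp_nat_mul]
    push_cast
    ring_nf
  simp_rw [hpow]
  refine (norm_tprod_one_sub_pow_le hq1).trans_eq (tsum_congr fun n ↦ ?_)
  have hpent : 2 * (pentagonal n : ℝ) = n * (3 * n - 1) := by
    exact_mod_cast two_mul_natCast_pentagonal n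
  rw [hq, ← Real.exp_nat_mul]
  congr 1
  linear_combination (-(π * z.im)) * hpent
end

section
/- Let Δ₃⁺(z) = (η(z)η(3z))^{12}, where η is the Dedekind eta function. For z = (1/√3)e^{iθ} with π/2 ≤ θ ≤ 23/10, one has 2.8964×10⁻⁴ < |Δ₃⁺(z)| < 1.0258×10⁻². -/
open Complex Real

/-- The Dedekind eta function. -/
noncomputable def dedekindEta (z : ℂ) : ℂ :=
  Complex.exp (2 * (Real.pi : ℂ) * Complex.I * z / 24) *
    ∏' n : ℕ, (1 - Complex.exp (2 * (Real.pi : ℂ) * Complex.I * ((n : ℂ) + 1) * z))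

/-- `Δ₃⁺(z) = (η(z)η(3z))^{12}`. -/
noncomputable def Delta3Plus (z : ℂ) : ℂ := (dedekindEta z * dedekindEta (3 * z)) ^ 12

/-!
With `q = e^{2πiz}` one has `Δ₃⁺(z) = q² (φ(q) φ(q³))¹²` for Euler's function
`φ(q) = ∏ (1 - qⁿ)`, and the bound `‖log (1 - w)‖ ≤ 3/2 ‖w‖` for `‖w‖ ≤ 1/2` puts `‖φ(q)‖`
between `exp (∓ 3/2 |q|/(1 - |q|))`. On the arc, `|q| = exp (-2π sin θ / √3)` lies in
`[0.023, 0.0685]`. So `‖Δ₃⁺(z)‖ ≥ |q|² e^{-20|q|}`, which is increasing for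
`|q| ≤ 1/10`, so it is smallest at the smallest `|q|`. For the upper bound the factor `1 - q` is
split off `φ(q)`: the phase `2π Re z` of `q` stays within `2.44` of `0`, so `Re q ≥ -4/5 |q|`.
-/

lemma norm_tprod_one_sub_bounds {f : ℕ → ℂ} (hf : Summable fun n => ‖f n‖)
    (hf_le : ∀ n, ‖f n‖ ≤ 1 / 2) :
    Real.exp (-(3 / 2 * ∑' n, ‖f n‖)) ≤ ‖∏' n, (1 - f n)‖ ∧
      ‖∏' n, (1 - f n)‖ ≤ Real.exp (3 / 2 * ∑' n, ‖f n‖) := by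
  have hlog (n : ℕ) : ‖log (1 - f n)‖ ≤ 3 / 2 * ‖f n‖ := by
    simpa [sub_eq_add_neg] using
      norm_log_one_add_half_le_self (z := -f n) (by simpa using hf_le n)
  have hsum : Summable fun n => ‖log (1 - f n)‖ :=
    (hf.mul_left (3 / 2)).of_nonneg_of_le (fun _ => norm_nonneg _) hlog
  have hne (n : ℕ) : 1 - f n ≠ 0 := by
    intro h
    have := hf_le n
    rw [← sub_eq_zero.1 h, norm_one] at this
    norm_num at this
  have hre : |(∑' n, log (1 - f n)).re| ≤ 3 / 2 * ∑' n, ‖f n‖ := calc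
    _ ≤ ‖∑' n, log (1 - f n)‖ := abs_re_le_norm _
    _ ≤ ∑' n, ‖log (1 - f n)‖ := norm_tsum_le_tsum_norm hsum
    _ ≤ ∑' n, 3 / 2 * ‖f n‖ := hsum.tsum_le_tsum hlog (hf.mul_left _)
    _ = _ := tsum_mul_left
  rw [← cexp_tsum_eq_tprod hne hsum.of_norm, norm_exp]
  exact ⟨Real.exp_le_exp.2 (neg_le_of_abs_le hre), Real.exp_le_exp.2 (le_of_abs_le hre)⟩

lemma norm_tprod_one_sub_pow_bounds {q : ℂ} (hq : ‖q‖ ≤ 1 / 2) (k : ℕ) :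
    Real.exp (-(3 / 2 * (‖q‖ ^ (k + 1) / (1 - ‖q‖)))) ≤ ‖∏' n : ℕ, (1 - q ^ (n + k + 1))‖ ∧
      ‖∏' n : ℕ, (1 - q ^ (n + k + 1))‖ ≤ Real.exp (3 / 2 * (‖q‖ ^ (k + 1) / (1 - ‖q‖))) := by
  have hq1 : ‖q‖ < 1 := by linarith
  have hterm (n : ℕ) : ‖q ^ (n + k + 1)‖ = ‖q‖ ^ (k + 1) * ‖q‖ ^ n := by
    rw [norm_pow, ← pow_add]; ring_nf
  have hgeom := (summable_geometric_of_lt_one (norm_nonneg q) hq1).mul_left (‖q‖ ^ (k + 1))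
  have htsum : ∑' n : ℕ, ‖q ^ (n + k + 1)‖ = ‖q‖ ^ (k + 1) / (1 - ‖q‖) := by
    simp_rw [hterm, tsum_mul_left, tsum_geometric_of_lt_one (norm_nonneg q) hq1, div_eq_mul_inv]
  rw [← htsum]
  refine norm_tprod_one_sub_bounds (by simpa only [hterm] using hgeom) fun n => ?_
  rw [norm_pow]
  exact (pow_le_of_le_one (norm_nonneg q) hq1.le (by omega)).trans hq

noncomputable def eulerPhi (q : ℂ) : ℂ := ∏' n : ℕ, (1 - q ^ (n + 1))

lemma dedekindEta_eq (z : ℂ) :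
    dedekindEta z = cexp (2 * π * I * z / 24) * eulerPhi (cexp (2 * π * I * z)) := by
  rw [dedekindEta, eulerPhi]
  congr 2 with n
  rw [← Complex.exp_nat_mul]
  push_cast
  ring_nf

lemma Delta3Plus_eq (z : ℂ) :
    Delta3Plus z = cexp (2 * π * I * z) ^ 2 *
      (eulerPhi (cexp (2 * π * I * z)) * eulerPhi (cexp (2 * π * I * z) ^ 3)) ^ 12 := by
  have h3 : cexp (2 * π * I * (3 * z)) = cexp (2 * π * I * z) ^ 3 := by
    rw [← Complex.exp_nat_mul]; push_cast; ring_nf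
  have hpre : (cexp (2 * π * I * z / 24) * cexp (2 * π * I * (3 * z) / 24)) ^ 12 =
      cexp (2 * π * I * z) ^ 2 := by
    rw [← Complex.exp_add, ← Complex.exp_nat_mul, ← Complex.exp_nat_mul]; push_cast; ring_nf
  rw [Delta3Plus, dedekindEta_eq, dedekindEta_eq, h3, ← hpre]
  ring

lemma eulerPhi_eq_one_sub_mul {q : ℂ} (hq : ‖q‖ < 1) :
    eulerPhi q = (1 - q) * ∏' n : ℕ, (1 - q ^ (n + 1 + 1)) := by
  have h : Multipliable fun n : ℕ => 1 - q ^ (n + 1 + 1) := by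
    apply multipliable_one_add_of_summable (f := fun n => -q ^ (n + 1 + 1))
    simpa using (summable_nat_add_iff 2).mpr (summable_geometric_of_lt_one (norm_nonneg _) hq)
  rw [eulerPhi, tprod_eq_zero_mul' (f := fun n : ℕ => 1 - q ^ (n + 1)) h]
  simp

lemma norm_eulerPhi_bounds {q : ℂ} (hq : ‖q‖ ≤ 1 / 2) :
    Real.exp (-(3 / 2 * (‖q‖ / (1 - ‖q‖)))) ≤ ‖eulerPhi q‖ ∧
      ‖eulerPhi q‖ ≤ Real.exp (3 / 2 * (‖q‖ / (1 - ‖q‖))) := by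
  simpa only [eulerPhi, add_zero, zero_add, pow_one] using norm_tprod_one_sub_pow_bounds hq 0

lemma norm_eulerPhi_le_norm_one_sub_mul {q : ℂ} (hq : ‖q‖ ≤ 1 / 2) :
    ‖eulerPhi q‖ ≤ ‖1 - q‖ * Real.exp (3 / 2 * (‖q‖ ^ 2 / (1 - ‖q‖))) := by
  rw [eulerPhi_eq_one_sub_mul (by linarith), norm_mul]
  exact mul_le_mul_of_nonneg_left (norm_tprod_one_sub_pow_bounds hq 1).2 (norm_nonneg _)

lemma norm_pow_three_le {q : ℂ} (hq : ‖q‖ ≤ 1 / 2) : ‖q ^ 3‖ ≤ 1 / 2 := by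
  rw [norm_pow]
  exact (pow_le_of_le_one (norm_nonneg q) (by linarith) (by norm_num)).trans hq

lemma exp_neg_le_norm_eulerPhi_mul {q : ℂ} (hq : ‖q‖ ≤ 1 / 2) :
    Real.exp (-(3 / 2 * (‖q‖ / (1 - ‖q‖) + ‖q‖ ^ 3 / (1 - ‖q‖ ^ 3)))) ≤
      ‖eulerPhi q * eulerPhi (q ^ 3)‖ := by
  have h3 := (norm_eulerPhi_bounds (norm_pow_three_le hq)).1
  rw [norm_pow] at h3
  rw [norm_mul, mul_add, neg_add, Real.exp_add]
  exact mul_le_mul (norm_eulerPhi_bounds hq).1 h3 (Real.exp_pos _).le (norm_nonneg _)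

lemma norm_eulerPhi_mul_le {q : ℂ} (hq : ‖q‖ ≤ 1 / 2) :
    ‖eulerPhi q * eulerPhi (q ^ 3)‖ ≤
      ‖1 - q‖ * Real.exp (3 / 2 * (‖q‖ ^ 2 / (1 - ‖q‖) + ‖q‖ ^ 3 / (1 - ‖q‖ ^ 3))) := by
  have h3 := (norm_eulerPhi_bounds (norm_pow_three_le hq)).2
  rw [norm_pow] at h3
  rw [norm_mul, mul_add, Real.exp_add, ← mul_assoc]
  exact mul_le_mul (norm_eulerPhi_le_norm_one_sub_mul hq) h3 (norm_nonneg _) (by positivity)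

lemma sq_mul_exp_neg_le_sq_mul_exp_neg {c r s : ℝ} (hc : 0 ≤ c) (hr : 0 ≤ r) (hrs : r ≤ s)
    (hcs : c * s ≤ 2) : r ^ 2 * Real.exp (-(c * r)) ≤ s ^ 2 * Real.exp (-(c * s)) := by
  set t := c * (s - r) / 2 with ht_def
  have ht : 0 ≤ 1 - t := by rw [ht_def]; nlinarith
  have hexp : (1 - t) ^ 2 ≤ Real.exp (-(c * (s - r))) := calc
    (1 - t) ^ 2 ≤ Real.exp (-t) ^ 2 := by gcongr; linarith [Real.add_one_le_exp (-t)]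
    _ = _ := by rw [← Real.exp_nat_mul, ht_def]; ring_nf
  have hr_le : r ≤ s * (1 - t) := by rw [ht_def]; nlinarith
  calc r ^ 2 * Real.exp (-(c * r)) ≤ (s * (1 - t)) ^ 2 * Real.exp (-(c * r)) := by gcongr
    _ ≤ s ^ 2 * (Real.exp (-(c * (s - r))) * Real.exp (-(c * r))) := by
        rw [mul_pow, mul_assoc]; gcongr
    _ = s ^ 2 * Real.exp (-(c * s)) := by rw [← Real.exp_add]; ring_nf

lemma lt_sq_mul_exp_neg_pow_twelve {r : ℝ} (h0 : 0.023 ≤ r) (h1 : r ≤ 0.0685) :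
    0.00028964 < r ^ 2 * Real.exp (-(3 / 2 * (r / (1 - r) + r ^ 3 / (1 - r ^ 3)))) ^ 12 := by
  have hr1 : r / (1 - r) ≤ 1.08 * r := by
    rw [div_le_iff₀ (by linarith)]; nlinarith
  have hr3 : r ^ 3 / (1 - r ^ 3) ≤ 0.006 * r := by
    have : r ^ 3 ≤ 0.0685 ^ 2 * r := by
      have : r ^ 2 ≤ 0.0685 ^ 2 := by gcongr
      nlinarith
    rw [div_le_iff₀ (by nlinarith)]; nlinarith
  have hexp : Real.exp (-(20 * r)) ≤
      Real.exp (-(3 / 2 * (r / (1 - r) + r ^ 3 / (1 - r ^ 3)))) ^ 12 := by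
    rw [← Real.exp_nat_mul, Real.exp_le_exp]; push_cast; linarith
  have hmono := sq_mul_exp_neg_le_sq_mul_exp_neg (c := 20) (by norm_num) (by norm_num) h0
    (by linarith)
  have h023 : (1 - 20 * 0.023 / 2 : ℝ) ^ 2 ≤ Real.exp (-(20 * 0.023)) := by
    exact_mod_cast Real.one_sub_div_pow_le_exp_neg (n := 2) (t := 20 * 0.023) (by norm_num)
  calc (0.00028964 : ℝ) < 0.023 ^ 2 * (1 - 20 * 0.023 / 2) ^ 2 := by norm_num
    _ ≤ 0.023 ^ 2 * Real.exp (-(20 * 0.023)) := by gcongr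
    _ ≤ r ^ 2 * Real.exp (-(20 * r)) := hmono
    _ ≤ _ := by gcongr

lemma sq_mul_pow_six_mul_exp_pow_twelve_lt {r : ℝ} (h0 : 0 ≤ r) (h1 : r ≤ 0.0685) :
    r ^ 2 * (1 + 8 / 5 * r + r ^ 2) ^ 6 *
      Real.exp (3 / 2 * (r ^ 2 / (1 - r) + r ^ 3 / (1 - r ^ 3))) ^ 12 < 0.010258 := by
  set ρ : ℝ := 0.0685
  have hmono : r ^ 2 * (1 + 8 / 5 * r + r ^ 2) ^ 6 *
      Real.exp (3 / 2 * (r ^ 2 / (1 - r) + r ^ 3 / (1 - r ^ 3))) ^ 12 ≤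
      ρ ^ 2 * (1 + 8 / 5 * ρ + ρ ^ 2) ^ 6 *
      Real.exp (3 / 2 * (ρ ^ 2 / (1 - ρ) + ρ ^ 3 / (1 - ρ ^ 3))) ^ 12 := by
    gcongr
  have hexp : Real.exp (3 / 2 * (ρ ^ 2 / (1 - ρ) + ρ ^ 3 / (1 - ρ ^ 3))) ^ 12 ≤
      1 / (1 - 12 * (3 / 2 * (ρ ^ 2 / (1 - ρ) + ρ ^ 3 / (1 - ρ ^ 3)))) := by
    rw [← Real.exp_nat_mul]; push_cast
    exact Real.exp_bound_div_one_sub_of_interval (by norm_num) (by norm_num)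
  refine hmono.trans_lt ((mul_le_mul_of_nonneg_left hexp (by positivity)).trans_lt ?_)
  norm_num

lemma lt_norm_sq_mul_eulerPhi_mul_pow {q : ℂ} (h0 : 0.023 ≤ ‖q‖) (h1 : ‖q‖ ≤ 0.0685) :
    0.00028964 < ‖q ^ 2 * (eulerPhi q * eulerPhi (q ^ 3)) ^ 12‖ := by
  rw [norm_mul, norm_pow, norm_pow]
  calc _ < _ := lt_sq_mul_exp_neg_pow_twelve h0 h1
    _ ≤ _ := by gcongr; exact exp_neg_le_norm_eulerPhi_mul (by linarith)

lemma norm_one_sub_sq (q : ℂ) : ‖1 - q‖ ^ 2 = 1 - 2 * q.re + ‖q‖ ^ 2 := by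
  rw [Complex.sq_norm, Complex.sq_norm, normSq_apply, normSq_apply]
  simp only [sub_re, one_re, sub_im, one_im]
  ring

lemma norm_sq_mul_eulerPhi_mul_pow_lt {q : ℂ} (h1 : ‖q‖ ≤ 0.0685)
    (hre : -(4 / 5 * ‖q‖) ≤ q.re) :
    ‖q ^ 2 * (eulerPhi q * eulerPhi (q ^ 3)) ^ 12‖ < 0.010258 := by
  have hsub : ‖1 - q‖ ^ 2 ≤ 1 + 8 / 5 * ‖q‖ + ‖q‖ ^ 2 := by
    rw [norm_one_sub_sq]; linarith
  rw [norm_mul, norm_pow, norm_pow]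
  set E := Real.exp (3 / 2 * (‖q‖ ^ 2 / (1 - ‖q‖) + ‖q‖ ^ 3 / (1 - ‖q‖ ^ 3)))
  calc _ ≤ ‖q‖ ^ 2 * (‖1 - q‖ * E) ^ 12 := by
        gcongr; exact norm_eulerPhi_mul_le (by linarith)
    _ = ‖q‖ ^ 2 * (‖1 - q‖ ^ 2) ^ 6 * E ^ 12 := by ring
    _ ≤ ‖q‖ ^ 2 * (1 + 8 / 5 * ‖q‖ + ‖q‖ ^ 2) ^ 6 * E ^ 12 := by gcongr
    _ < 0.010258 := sq_mul_pow_six_mul_exp_pow_twelve_lt (norm_nonneg q) h1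

lemma two_pi_I_mul_arc (θ : ℝ) :
    2 * π * I * ((1 / (√3 : ℂ)) * cexp (I * θ)) =
      ((-(2 * π / √3 * Real.sin θ) : ℝ) : ℂ) + ((2 * π / √3 * Real.cos θ : ℝ) : ℂ) * I := by
  rw [mul_comm I, Complex.exp_mul_I, ← ofReal_cos, ← ofReal_sin]
  push_cast
  field_simp
  ring_nf
  rw [I_sq]
  ring

lemma norm_exp_two_pi_I_mul_arc (θ : ℝ) :
    ‖cexp (2 * π * I * ((1 / (√3 : ℂ)) * cexp (I * θ)))‖ =
      Real.exp (-(2 * π / √3 * Real.sin θ)) := by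
  rw [norm_exp, two_pi_I_mul_arc]
  simp [sin_ofReal_re, cos_ofReal_re]

lemma re_exp_two_pi_I_mul_arc (θ : ℝ) :
    (cexp (2 * π * I * ((1 / (√3 : ℂ)) * cexp (I * θ)))).re =
      Real.exp (-(2 * π / √3 * Real.sin θ)) * Real.cos (2 * π / √3 * Real.cos θ) := by
  rw [exp_re, two_pi_I_mul_arc]
  simp [sin_ofReal_re, cos_ofReal_re]

lemma two_pi_div_sqrt_three_mem_Ioo : 3.6273 < 2 * π / √3 ∧ 2 * π / √3 < 3.6278 := by
  have hs0 : (1.732 : ℝ) < √3 := by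
    rw [Real.lt_sqrt (by norm_num)]; norm_num
  have hs1 : √3 < 1.7321 := by
    rw [Real.sqrt_lt' (by norm_num)]; norm_num
  have hπ0 := Real.pi_gt_d4
  have hπ1 := Real.pi_lt_d4
  constructor
  · rw [lt_div_iff₀ (by linarith)]; nlinarith
  · rw [div_lt_iff₀ (by linarith)]; nlinarith

lemma sin_ge_of_mem_Icc {θ : ℝ} (h1 : π / 2 ≤ θ) (h2 : θ ≤ 23 / 10) : 0.742 ≤ Real.sin θ := by
  have hπ := Real.pi_gt_d4
  rw [← Real.sin_pi_sub]
  calc (0.742 : ℝ) ≤ 0.8415 - 0.8415 ^ 3 / 6 := by norm_num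
    _ ≤ Real.sin 0.8415 := Real.sin_ge_sub_cube (by norm_num)
    _ ≤ Real.sin (π - θ) :=
        Real.sin_le_sin_of_le_of_le_pi_div_two (by linarith) (by linarith) (by linarith)

lemma neg_four_fifths_le_cos {x : ℝ} (hx : |x| ≤ 2.44) : -(4 / 5) ≤ Real.cos x := by
  have hπ := Real.pi_gt_d4
  have h07 : Real.cos 0.7 ≤ 4 / 5 := by
    have := (abs_le.1 (Real.cos_bound (x := 0.7) (by norm_num [abs_of_pos]))).2
    norm_num [abs_of_pos] at this ⊢
    linarith
  have hmono : Real.cos (π - |x|) ≤ Real.cos 0.7 :=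
    Real.cos_le_cos_of_nonneg_of_le_pi (by norm_num) (by linarith [abs_nonneg x]) (by linarith)
  rw [← Real.cos_abs, ← neg_neg (Real.cos |x|), ← Real.cos_pi_sub]
  linarith

lemma exp_neg_le_of_ge_2_69 {x : ℝ} (hx : 2.69 ≤ x) : Real.exp (-x) ≤ 0.0685 := by
  have hsum := Real.sum_le_exp_of_nonneg (x := 2.69) (by norm_num) 8
  simp only [Finset.sum_range_succ, Finset.sum_range_zero, Nat.factorial] at hsum
  rw [Real.exp_neg, inv_le_comm₀ (Real.exp_pos x) (by norm_num)]
  calc (0.0685 : ℝ)⁻¹ ≤ Real.exp 2.69 := by norm_num at hsum ⊢; linarith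
    _ ≤ Real.exp x := Real.exp_le_exp.2 hx

lemma le_exp_neg_of_le_3_6278 {x : ℝ} (hx : x ≤ 3.6278) : 0.023 ≤ Real.exp (-x) := by
  calc (0.023 : ℝ) ≤ (1 - 3.6278 / 64) ^ 64 := by norm_num
    _ ≤ Real.exp (-3.6278) := by
        exact_mod_cast Real.one_sub_div_pow_le_exp_neg (n := 64) (t := 3.6278) (by norm_num)
    _ ≤ Real.exp (-x) := Real.exp_le_exp.2 (by linarith)

/-- For `z = (1/√3)e^{iθ}` with `π/2 ≤ θ ≤ 23/10`,
`2.8964×10⁻⁴ < |Δ₃⁺(z)| < 1.0258×10⁻²`. -/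
theorem statement4 : ∀ θ : ℝ, Real.pi / 2 ≤ θ → θ ≤ 23 / 10 →
    0.00028964 < ‖Delta3Plus ((1 / (Real.sqrt 3 : ℂ)) * Complex.exp (Complex.I * θ))‖
    ∧ ‖Delta3Plus ((1 / (Real.sqrt 3 : ℂ)) * Complex.exp (Complex.I * θ))‖
        < 0.010258 := by
  intro θ h1 h2
  obtain ⟨ha0, ha1⟩ := two_pi_div_sqrt_three_mem_Ioo
  have hsin := sin_ge_of_mem_Icc h1 h2
  have hcos : |Real.cos θ| ≤ 0.6705 :=
    abs_le.2 ⟨by nlinarith [Real.sin_sq_add_cos_sq θ], by nlinarith [Real.sin_sq_add_cos_sq θ]⟩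
  rw [Delta3Plus_eq]
  have hnorm := norm_exp_two_pi_I_mul_arc θ
  have hre := re_exp_two_pi_I_mul_arc θ
  set q := cexp (2 * π * I * ((1 / (√3 : ℂ)) * cexp (I * θ)))
  have hq0 : 0.023 ≤ ‖q‖ := hnorm ▸ le_exp_neg_of_le_3_6278 (by nlinarith [Real.sin_le_one θ])
  have hq1 : ‖q‖ ≤ 0.0685 := hnorm ▸ exp_neg_le_of_ge_2_69 (by nlinarith)
  have hphase : -(4 / 5) ≤ Real.cos (2 * π / √3 * Real.cos θ) :=
    neg_four_fifths_le_cos <| by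
      rw [abs_mul, abs_of_pos (by linarith)]; nlinarith [abs_nonneg (Real.cos θ)]
  rw [← hnorm] at hre
  exact ⟨lt_norm_sq_mul_eulerPhi_mul_pow hq0 hq1,
    norm_sq_mul_eulerPhi_mul_pow_lt hq1 (by rw [hre]; nlinarith [norm_nonneg q])⟩
end

section
/- Let Δ₃⁺(z) = (η(z)η(3z))^{12}. For τ = x + 0.35i with -1/2 ≤ x ≤ 1/2, one has 4.3086×10⁻⁴ < |Δ₃⁺(τ)| < 5.0415×10⁻². -/
open Complex Real

/-!
With `q = e^{2πiz}` and `y = Im z`, taking logarithms gives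
`log |Δ₃⁺(z)| = -4πy + 12 (∑ log |1 - qⁿ| + ∑ log |1 - q³ⁿ|)`, and at `y = 0.35` we have
`|q| = e^{-0.7π} ≤ 1/8`. Termwise, `-|w|/(1 - |w|) ≤ log |1 - w| ≤ |w|`, and geometric series
bound both sums. For the upper bound the termwise estimate is too weak on the first two factors,
which are instead bounded jointly: `|1 - q| |1 - q²| ≤ (1 + |q|)² (1 - |q|)`, the maximum being
attained at `q = -|q|`. The exponent then lies between `-7` and `-3`.
-/

open Function.Periodic ModularForm

lemma log_norm_one_sub_le_norm (w : ℂ) : Real.log ‖1 - w‖ ≤ ‖w‖ := by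
  rcases (norm_nonneg (1 - w)).eq_or_lt with h | h
  · rw [← h, Real.log_zero]
    positivity
  · calc Real.log ‖1 - w‖ ≤ ‖1 - w‖ - 1 := Real.log_le_sub_one_of_pos h
      _ ≤ ‖w‖ := by linarith [norm_sub_le (1 : ℂ) w, norm_one (α := ℂ)]

lemma neg_div_one_sub_le_log_norm_one_sub {w : ℂ} (hw : ‖w‖ < 1) :
    -(‖w‖ / (1 - ‖w‖)) ≤ Real.log ‖1 - w‖ := by
  have hpos : 0 < 1 - ‖w‖ := by linarith
  calc -(‖w‖ / (1 - ‖w‖)) = 1 - (1 - ‖w‖)⁻¹ := by field_simp; ring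
    _ ≤ Real.log (1 - ‖w‖) := Real.one_sub_inv_le_log_of_pos hpos
    _ ≤ Real.log ‖1 - w‖ := Real.log_le_log hpos (by simpa using norm_sub_norm_le (1 : ℂ) w)

section

variable {c : ℂ} {ρ : ℝ}

lemma norm_one_sub_mul_norm_one_sub_sq_le (hc : ‖c‖ ≤ ρ) (hρ : ρ ≤ 1 / 6) :
    ‖1 - c‖ * ‖1 - c ^ 2‖ ≤ (1 + ρ) ^ 2 * (1 - ρ) := by
  set r := ‖c‖
  set u := ‖1 - c‖
  set v := ‖1 + c‖
  have hr : 0 ≤ r := norm_nonneg c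
  have hparallelogram : u ^ 2 + v ^ 2 = 2 + 2 * r ^ 2 := by
    simp only [u, v, r, Complex.sq_norm, Complex.normSq_apply, Complex.sub_re, Complex.sub_im,
      Complex.add_re, Complex.add_im, Complex.one_re, Complex.one_im]
    ring
  have hv : 1 - r ≤ v := by simpa [v] using norm_sub_norm_le (1 : ℂ) (-c)
  -- `t ↦ (2 + 2r²) t - t³` decreases for `t ≥ 1 - r`, because `3 (1 - r)² ≥ 2 + 2r²` when `r ≤ 1/6`
  have hdecr : 2 + 2 * r ^ 2 ≤ v ^ 2 + v * (1 - r) + (1 - r) ^ 2 := by nlinarith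
  have hr_max : u ^ 2 * v ≤ (1 + r) ^ 2 * (1 - r) := by
    nlinarith [mul_nonneg (sub_nonneg.2 hv) (sub_nonneg.2 hdecr)]
  calc ‖1 - c‖ * ‖1 - c ^ 2‖ = u ^ 2 * v := by
        rw [show 1 - c ^ 2 = (1 - c) * (1 + c) by ring, norm_mul]
        ring
    _ ≤ (1 + r) ^ 2 * (1 - r) := hr_max
    _ ≤ (1 + ρ) ^ 2 * (1 - ρ) := by
        have hslope : 0 ≤ 1 - ρ - r - ρ ^ 2 - ρ * r - r ^ 2 := by nlinarith
        nlinarith [mul_nonneg (sub_nonneg.2 hc) hslope]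

lemma summable_log_norm_one_sub_pow (hc : ‖c‖ < 1) :
    Summable fun n : ℕ ↦ Real.log ‖1 - c ^ (n + 1)‖ := by
  have hsum : Summable fun n : ℕ ↦ ‖-c ^ (n + 1)‖ := by
    simpa [norm_pow] using
      (summable_nat_add_iff 1).mpr (summable_geometric_of_lt_one (norm_nonneg _) hc)
  simpa [sub_eq_add_neg] using hsum.summable_log_norm_one_add

lemma norm_one_sub_pow_pos (hc : ‖c‖ < 1) (n : ℕ) : 0 < ‖1 - c ^ (n + 1)‖ := by
  refine norm_pos_iff.2 (sub_ne_zero.2 fun h ↦ ?_)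
  have : ‖c‖ ^ (n + 1) < 1 := pow_lt_one₀ (norm_nonneg c) hc n.succ_ne_zero
  rw [← norm_pow, ← h, norm_one] at this
  exact this.false

lemma norm_tprod_one_sub_pow (hc : ‖c‖ < 1) :
    ‖∏' n : ℕ, (1 - c ^ (n + 1))‖ = Real.exp (∑' n : ℕ, Real.log ‖1 - c ^ (n + 1)‖) := by
  rw [(multipliable_one_sub_pow hc).norm_tprod,
    Real.rexp_tsum_eq_tprod (norm_one_sub_pow_pos hc) (summable_log_norm_one_sub_pow hc)]

lemma tsum_log_norm_one_sub_pow_add_le (hc : ‖c‖ ≤ ρ) (hρ : ρ < 1) (k : ℕ) :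
    ∑' n : ℕ, Real.log ‖1 - c ^ (n + k + 1)‖ ≤ ρ ^ (k + 1) / (1 - ρ) := by
  have hρ0 : 0 ≤ ρ := (norm_nonneg c).trans hc
  have hgeom : ∑' n : ℕ, ρ ^ (k + 1) * ρ ^ n = ρ ^ (k + 1) / (1 - ρ) := by
    rw [tsum_mul_left, tsum_geometric_of_lt_one hρ0 hρ, div_eq_mul_inv]
  rw [← hgeom]
  refine Summable.tsum_le_tsum (fun n ↦ ?_)
    ((summable_nat_add_iff k).2 (summable_log_norm_one_sub_pow (hc.trans_lt hρ)))
    ((summable_geometric_of_lt_one hρ0 hρ).mul_left _)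
  calc Real.log ‖1 - c ^ (n + k + 1)‖ ≤ ‖c‖ ^ (n + k + 1) := by
        simpa [norm_pow] using log_norm_one_sub_le_norm (c ^ (n + k + 1))
    _ ≤ ρ ^ (n + k + 1) := by gcongr
    _ = ρ ^ (k + 1) * ρ ^ n := by ring

lemma tsum_log_norm_one_sub_pow_le (hc : ‖c‖ ≤ ρ) (hρ : ρ < 1) :
    ∑' n : ℕ, Real.log ‖1 - c ^ (n + 1)‖ ≤ ρ / (1 - ρ) := by
  simpa using tsum_log_norm_one_sub_pow_add_le hc hρ 0

lemma neg_div_sq_le_tsum_log_norm_one_sub_pow (hc : ‖c‖ ≤ ρ) (hρ : ρ < 1) :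
    -(ρ / (1 - ρ) ^ 2) ≤ ∑' n : ℕ, Real.log ‖1 - c ^ (n + 1)‖ := by
  have hρ0 : 0 ≤ ρ := (norm_nonneg c).trans hc
  have hgeom : ∑' n : ℕ, -(ρ / (1 - ρ)) * ρ ^ n = -(ρ / (1 - ρ) ^ 2) := by
    rw [tsum_mul_left, tsum_geometric_of_lt_one hρ0 hρ]
    field_simp
  rw [← hgeom]
  refine Summable.tsum_le_tsum (fun n ↦ ?_) ((summable_geometric_of_lt_one hρ0 hρ).mul_left _)
    (summable_log_norm_one_sub_pow (hc.trans_lt hρ))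
  have hcn : ‖c ^ (n + 1)‖ ≤ ρ ^ (n + 1) := by rw [norm_pow]; gcongr
  have hρn : ρ ^ (n + 1) ≤ ρ := pow_le_of_le_one hρ0 hρ.le n.succ_ne_zero
  calc -(ρ / (1 - ρ)) * ρ ^ n = -(ρ ^ (n + 1) / (1 - ρ)) := by ring
    _ ≤ -(‖c ^ (n + 1)‖ / (1 - ‖c ^ (n + 1)‖)) := by
        gcongr
        linarith
    _ ≤ Real.log ‖1 - c ^ (n + 1)‖ := neg_div_one_sub_le_log_norm_one_sub (by linarith)

lemma tsum_log_norm_one_sub_pow_le_of_le_one_sixth (hc : ‖c‖ ≤ ρ) (hρ : ρ ≤ 1 / 6) :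
    ∑' n : ℕ, Real.log ‖1 - c ^ (n + 1)‖ ≤
      Real.log ((1 + ρ) ^ 2 * (1 - ρ)) + ρ ^ 3 / (1 - ρ) := by
  have hc1 : ‖c‖ < 1 := by linarith
  have hpos := norm_one_sub_pow_pos hc1
  rw [← (summable_log_norm_one_sub_pow hc1).sum_add_tsum_nat_add 2, Finset.sum_range_succ,
    Finset.sum_range_one, ← Real.log_mul (hpos 0).ne' (hpos 1).ne']
  refine add_le_add (Real.log_le_log (mul_pos (hpos 0) (hpos 1)) ?_)
    (tsum_log_norm_one_sub_pow_add_le hc (by linarith) 2)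
  simpa using norm_one_sub_mul_norm_one_sub_sq_le hc hρ

end

lemma dedekindEta_eq_eta : dedekindEta = η := by
  funext z
  simp only [dedekindEta, ModularForm.eta, eta_q_eq_cexp, qParam]
  push_cast
  rfl

lemma norm_eta {z : ℂ} (hz : 0 < z.im) :
    ‖η z‖ = Real.exp (-(π * z.im / 12) + ∑' n : ℕ, Real.log ‖1 - qParam 1 z ^ (n + 1)‖) := by
  rw [ModularForm.eta, norm_mul, norm_tprod_one_sub_pow (norm_qParam_lt_one one_pos hz),
    norm_qParam, Real.exp_add]
  congr 2
  ring

lemma qParam_natCast_mul (h : ℝ) (n : ℕ) (z : ℂ) : qParam h (n * z) = qParam h z ^ n := by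
  rw [qParam, qParam, ← Complex.exp_nat_mul]
  ring_nf

lemma norm_Delta3Plus {z : ℂ} (hz : 0 < z.im) :
    ‖Delta3Plus z‖ = Real.exp (12 * (-(π * z.im / 3)
      + ∑' n : ℕ, Real.log ‖1 - qParam 1 z ^ (n + 1)‖
      + ∑' n : ℕ, Real.log ‖1 - (qParam 1 z ^ 3) ^ (n + 1)‖)) := by
  have h3z : 0 < (3 * z).im := by simpa using hz
  rw [Delta3Plus, dedekindEta_eq_eta, norm_pow, norm_mul, norm_eta hz, norm_eta h3z,
    show qParam 1 (3 * z) = qParam 1 z ^ 3 by exact_mod_cast qParam_natCast_mul 1 3 z,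
    ← Real.exp_add, ← Real.exp_nat_mul]
  congr 1
  simp only [Complex.mul_im, Complex.re_ofNat, Complex.im_ofNat]
  push_cast
  ring

lemma norm_qParam_one_le_one_eighth {z : ℂ} (hz : z.im = 0.35) : ‖qParam 1 z‖ ≤ 1 / 8 := by
  have hlog8 : Real.log 8 = 3 * Real.log 2 := by
    rw [show (8 : ℝ) = 2 ^ 3 by norm_num, Real.log_pow]
    norm_num
  rw [norm_qParam, hz, show (1 / 8 : ℝ) = Real.exp (-Real.log 8) by
    rw [Real.exp_neg, Real.exp_log (by norm_num)]; norm_num]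
  exact Real.exp_le_exp.2 (by nlinarith [Real.log_two_lt_d9, Real.pi_gt_d2])

lemma lower_bound_lt_exp_neg_seven : (0.00043086 : ℝ) < Real.exp (-7) := by
  have he : Real.exp 1 ^ 7 < 3 ^ 7 :=
    pow_lt_pow_left₀ Real.exp_one_lt_three (Real.exp_pos 1).le (by norm_num)
  rw [Real.exp_one_pow] at he
  rw [Real.exp_neg, lt_inv_comm₀ (by norm_num) (Real.exp_pos _)]
  push_cast at he
  linarith

lemma exp_neg_three_lt_upper_bound : Real.exp (-3) < 0.050415 := by
  have he : (2.7182818283 : ℝ) ^ 3 < Real.exp 1 ^ 3 :=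
    pow_lt_pow_left₀ Real.exp_one_gt_d9 (by norm_num) (by norm_num)
  rw [Real.exp_one_pow] at he
  rw [Real.exp_neg, inv_lt_comm₀ (Real.exp_pos _) (by norm_num)]
  push_cast at he
  linarith

/-- For `τ = x + 0.35i` with `-1/2 ≤ x ≤ 1/2`,
`4.3086×10⁻⁴ < |Δ₃⁺(τ)| < 5.0415×10⁻²`. -/
theorem statement5 : ∀ x : ℝ, -(1/2) ≤ x → x ≤ 1/2 →
    0.00043086 < ‖Delta3Plus ((x : ℂ) + 0.35 * Complex.I)‖
    ∧ ‖Delta3Plus ((x : ℂ) + 0.35 * Complex.I)‖ < 0.050415 := by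
  intro x _ _
  set z : ℂ := x + 0.35 * I
  have him : z.im = 0.35 := by simp [z]
  have hq : ‖qParam 1 z‖ ≤ 1 / 8 := norm_qParam_one_le_one_eighth him
  have hq3 : ‖qParam 1 z ^ 3‖ ≤ 1 / 512 := by
    rw [norm_pow]
    calc ‖qParam 1 z‖ ^ 3 ≤ (1 / 8) ^ 3 := by gcongr
      _ = 1 / 512 := by norm_num
  rw [norm_Delta3Plus (by rw [him]; norm_num), him]
  have hS₁ := neg_div_sq_le_tsum_log_norm_one_sub_pow hq (by norm_num)
  have hS₃ := neg_div_sq_le_tsum_log_norm_one_sub_pow hq3 (by norm_num)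
  have hS₁' := tsum_log_norm_one_sub_pow_le_of_le_one_sixth hq (by norm_num)
  have hS₃' := tsum_log_norm_one_sub_pow_le hq3 (by norm_num)
  have hlog := Real.log_le_sub_one_of_pos (x := (1 + 1 / 8) ^ 2 * (1 - 1 / 8)) (by norm_num)
  constructor
  · refine lower_bound_lt_exp_neg_seven.trans_le (Real.exp_le_exp.2 ?_)
    norm_num at hS₁ hS₃
    linarith [Real.pi_lt_d2]
  · refine lt_of_le_of_lt (Real.exp_le_exp.2 ?_) exp_neg_three_lt_upper_bound
    norm_num at hS₁' hS₃' hlog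
    linarith [Real.pi_gt_d2]
end

section
/- Define h(θ) = e^{-(2π/√3)(sin θ - sin θ/(7+4√3 cos θ))}·(7+4√3 cos θ)^{1/3}. Then h(5π/6) = 1, and h is strictly increasing on (23/10, 5π/6). -/
open Real

noncomputable def gaux (θ : ℝ) : ℝ :=
  -(2 * Real.pi / Real.sqrt 3) *
      (Real.sin θ - Real.sin θ / (7 + 4 * Real.sqrt 3 * Real.cos θ)) +
    (1 / 3) * Real.log (7 + 4 * Real.sqrt 3 * Real.cos θ)

private lemma sqrt3_facts : Real.sqrt 3 * Real.sqrt 3 = 3 ∧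
    (17/10 : ℝ) < Real.sqrt 3 ∧ Real.sqrt 3 < 18/10 := by
  have h := Real.mul_self_sqrt (by norm_num : (3:ℝ) ≥ 0)
  have hn := Real.sqrt_nonneg 3
  refine ⟨h, ?_, ?_⟩ <;> nlinarith

private lemma theta_facts {θ : ℝ} (h1 : (23/10 : ℝ) < θ) (h2 : θ < 5 * Real.pi / 6) :
    1/2 < Real.sin θ ∧ Real.cos θ < -(3/5) ∧ -(Real.sqrt 3 / 2) < Real.cos θ := by
  have pb1 : (3.141592 : ℝ) < Real.pi := Real.pi_gt_d6
  have pb2 : Real.pi < 3.141593 := Real.pi_lt_d6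
  have hθπ : θ < Real.pi := by linarith
  have hπθ : 0 < Real.pi - θ := by linarith
  have hπθ' : Real.pi - θ < 85/100 := by linarith
  constructor
  · -- sin θ = sin (π - θ) > sin (π/6) = 1/2
    have hmono := Real.strictMonoOn_sin
      (Set.mem_Icc.mpr ⟨by linarith, by linarith⟩)
      (Set.mem_Icc.mpr ⟨by linarith, by linarith⟩) (show Real.pi / 6 < Real.pi - θ by linarith)
    rw [Real.sin_pi_sub, Real.sin_pi_div_six] at hmono
    linarith
  constructor
  · -- cos θ = -cos(π-θ) < -(1 - (π-θ)²/2) < -3/5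
    have hb := Real.one_sub_sq_div_two_le_cos (x := Real.pi - θ)
    have : Real.cos (Real.pi - θ) = -Real.cos θ := Real.cos_pi_sub θ
    nlinarith
  · -- cos θ > cos (5π/6) = -(√3/2)
    have hmono := Real.strictAntiOn_cos
      (Set.mem_Icc.mpr ⟨by linarith, by linarith⟩)
      (Set.mem_Icc.mpr ⟨by linarith, by linarith⟩) h2
    have : Real.cos (5 * Real.pi / 6) = -(Real.sqrt 3 / 2) := by
      rw [show 5 * Real.pi / 6 = Real.pi - Real.pi / 6 by ring, Real.cos_pi_sub,
        Real.cos_pi_div_six]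
    linarith

/-- With
`h(θ) = e^{-(2π/√3)(sin θ - sin θ/(7+4√3 cos θ))}·(7+4√3 cos θ)^{1/3}`,
one has `h(5π/6) = 1` and `h` is strictly increasing on `(23/10, 5π/6)`. -/
theorem statement16 (h : ℝ → ℝ)
    (hh : ∀ θ : ℝ, h θ =
      Real.exp (-(2 * Real.pi / Real.sqrt 3) *
          (Real.sin θ - Real.sin θ / (7 + 4 * Real.sqrt 3 * Real.cos θ))) *
        (7 + 4 * Real.sqrt 3 * Real.cos θ) ^ ((1 : ℝ) / 3)) :
    h (5 * Real.pi / 6) = 1 ∧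
    StrictMonoOn h (Set.Ioo (23 / 10 : ℝ) (5 * Real.pi / 6)) := by
  obtain ⟨s3, s3a, s3b⟩ := sqrt3_facts
  constructor
  · rw [hh]
    have hc : Real.cos (5 * Real.pi / 6) = -(Real.sqrt 3 / 2) := by
      rw [show 5 * Real.pi / 6 = Real.pi - Real.pi / 6 by ring, Real.cos_pi_sub,
        Real.cos_pi_div_six]
    have h7 : 7 + 4 * Real.sqrt 3 * Real.cos (5 * Real.pi / 6) = 1 := by
      rw [hc]; nlinarith
    rw [h7]
    norm_num [Real.one_rpow, Real.exp_zero]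
  · -- monotonicity
    have t0 : (0:ℝ) < Real.sqrt 3 := by linarith
    -- facts at each point of the interval
    have key : ∀ θ ∈ Set.Ioo (23/10 : ℝ) (5 * Real.pi / 6),
        HasDerivAt gaux
          (-(2 * Real.pi / Real.sqrt 3) *
              (Real.cos θ -
                (Real.cos θ * (7 + 4 * Real.sqrt 3 * Real.cos θ) -
                    Real.sin θ * (4 * Real.sqrt 3 * -Real.sin θ)) /
                  (7 + 4 * Real.sqrt 3 * Real.cos θ) ^ 2) +
            (1 / 3) * ((4 * Real.sqrt 3 * -Real.sin θ) / (7 + 4 * Real.sqrt 3 * Real.cos θ))) θ ∧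
        0 < -(2 * Real.pi / Real.sqrt 3) *
              (Real.cos θ -
                (Real.cos θ * (7 + 4 * Real.sqrt 3 * Real.cos θ) -
                    Real.sin θ * (4 * Real.sqrt 3 * -Real.sin θ)) /
                  (7 + 4 * Real.sqrt 3 * Real.cos θ) ^ 2) +
            (1 / 3) * ((4 * Real.sqrt 3 * -Real.sin θ) / (7 + 4 * Real.sqrt 3 * Real.cos θ)) := by
      intro θ hθ
      obtain ⟨hs, hco1, hco2⟩ := theta_facts hθ.1 hθ.2
      set s := Real.sin θ with hsdef
      set co := Real.cos θ with hcodef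
      have hu1 : (1:ℝ) < 7 + 4 * Real.sqrt 3 * co := by nlinarith
      have hu3 : 7 + 4 * Real.sqrt 3 * co < 3 := by nlinarith
      have hune : (7 + 4 * Real.sqrt 3 * co) ≠ 0 := by linarith
      set u := 7 + 4 * Real.sqrt 3 * co with hudef
      constructor
      · have hu' : HasDerivAt (fun x => 7 + 4 * Real.sqrt 3 * Real.cos x)
            (4 * Real.sqrt 3 * -Real.sin θ) θ :=
          ((Real.hasDerivAt_cos θ).const_mul (4 * Real.sqrt 3)).const_add 7
        have hq : HasDerivAt (fun x => Real.sin x / (7 + 4 * Real.sqrt 3 * Real.cos x))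
            ((Real.cos θ * u - Real.sin θ * (4 * Real.sqrt 3 * -Real.sin θ)) / u ^ 2) θ :=
          (Real.hasDerivAt_sin θ).div hu' hune
        have hlog : HasDerivAt (fun x => Real.log (7 + 4 * Real.sqrt 3 * Real.cos x))
            ((4 * Real.sqrt 3 * -Real.sin θ) / u) θ := hu'.log hune
        exact ((((Real.hasDerivAt_sin θ).sub hq).const_mul
          (-(2 * Real.pi / Real.sqrt 3))).add (hlog.const_mul (1/3)))
      · -- positivity of the derivative
        have hπ : (3.141592 : ℝ) < Real.pi := Real.pi_gt_d6
        have hu0 : (0:ℝ) < u := by linarith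
        have hDN : -(2 * Real.pi / Real.sqrt 3) * (co - (co * u - s * (4 * Real.sqrt 3 * -s)) / u ^ 2) +
            (1 / 3) * ((4 * Real.sqrt 3 * -s) / u) =
            (24 * Real.pi * s ^ 2 + (6 * Real.pi / Real.sqrt 3) * ((-co) * u * (u - 1))
              - 4 * Real.sqrt 3 * s * u) / (3 * u ^ 2) := by
          field_simp
          ring
        rw [hDN]
        apply div_pos _ (by positivity)
        have hmid : 0 ≤ (6 * Real.pi / Real.sqrt 3) * ((-co) * u * (u - 1)) := by
          apply mul_nonneg (by positivity)
          apply mul_nonneg (mul_nonneg (by linarith) (by linarith)) (by linarith)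
        have spos : (0:ℝ) < s := by linarith
        have hA : 4 * Real.sqrt 3 * s * u < 216/10 * s := by
          nlinarith [mul_pos (mul_pos spos hu0) (show (0:ℝ) < 18/10 - Real.sqrt 3 by linarith),
            mul_pos spos (show (0:ℝ) < 3 - u by linarith)]
        have hB : 36 * s < 24 * Real.pi * s ^ 2 := by
          nlinarith [mul_pos spos (show (0:ℝ) < 2*s - 1 by linarith), sq_nonneg s]
        linarith
    -- gaux is strictly monotone on the interval
    have hmono : StrictMonoOn gaux (Set.Ioo (23/10 : ℝ) (5 * Real.pi / 6)) := by
      apply strictMonoOn_of_deriv_pos (convex_Ioo _ _)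
      · intro x hx
        exact ((key x hx).1.differentiableAt).continuousAt.continuousWithinAt
      · intro x hx
        rw [interior_Ioo] at hx
        rw [(key x hx).1.deriv]
        exact (key x hx).2
    have hexp : StrictMonoOn (fun θ => Real.exp (gaux θ)) (Set.Ioo (23/10 : ℝ) (5 * Real.pi / 6)) :=
      Real.exp_strictMono.comp_strictMonoOn hmono
    apply hexp.congr
    intro θ hθ
    obtain ⟨hs, hco1, hco2⟩ := theta_facts hθ.1 hθ.2
    have hu0 : (0:ℝ) < 7 + 4 * Real.sqrt 3 * Real.cos θ := by nlinarith
    rw [hh θ, Real.rpow_def_of_pos hu0, ← Real.exp_add]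
    simp only [gaux]
    congr 1
    ring
end
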